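/- For every set R ⊆ V with |R| ≤ 2k − 2: if COST_2(R) < n/k − 1, then R contains at least one vertex of Y and at least one vertex of each group X_h (h = 2, …, k), some vertex of U does not belong to R, and consequently COST_{n³}(R) ≥ n³; since opt_{n³}(k) ≤ n, this gives COST_{n³}(R) ≥ n² · opt_{n³}(k). -/

import Mathlib

/-- The lower-bound vertex set: `U` has `k-1` vertices, `Y` has `n'` vertices,
and the groups `X_2, …, X_k` are `k-1` groups of `n'-1` vertices each. -/
abbrev LBV (k n' : ℕ) : Type := Fin (k - 1) ⊕ (Fin n' ⊕ (Fin (k - 1) × Fin (n' - 1)))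

/-- The distance function `d_ζ` on the lower-bound vertex set. -/
noncomputable def dLB (k n' : ℕ) (ζ : ℝ) (a b : LBV k n') : ℝ :=
  if a = b then 0
  else
    match a, b with
    | Sum.inl _, _ => ζ
    | _, Sum.inl _ => ζ
    | Sum.inr (Sum.inl _), Sum.inr (Sum.inl _) => 0
    | Sum.inr (Sum.inr p), Sum.inr (Sum.inr q) => if p.1 = q.1 then 0 else 1
    | Sum.inr (Sum.inl _), Sum.inr (Sum.inr _) => 1
    | Sum.inr (Sum.inr _), Sum.inr (Sum.inl _) => 1

/-- The `k`-median cost of a set of centers `R`: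
`COST_ζ(R) = Σ_{v ∈ V} min_{r ∈ R} d_ζ(v, r)`. -/
noncomputable def costLB (k n' : ℕ) (ζ : ℝ) (R : Finset (LBV k n')) : ℝ :=
  ∑ v : LBV k n', sInf ((fun r => dLB k n' ζ v r) '' ↑R)

/-- `opt_ζ(kk) = min { COST_ζ(R) : R ⊆ V, |R| = kk }`. -/
noncomputable def optLB (k n' : ℕ) (ζ : ℝ) (kk : ℕ) : ℝ :=
  sInf {c : ℝ | ∃ R : Finset (LBV k n'), R.card = kk ∧ c = costLB k n' ζ R}

/-!
With `ζ = 2`, a vertex of `Y` or of `X_h` costs at least `1` unless its own group holds a center,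
and `Y` has `n'` vertices while `X_h` has `n' - 1`. So a set of cost below `n' - 1` has a center in
each of the `k` groups; with at most `2k - 2` centers it cannot also contain all `k - 1` vertices
of `U`, and an uncovered `u ∈ U` alone costs `ζ`. On the other hand, `U` together with one vertex
of `Y` covers every vertex at distance at most `1`, so `opt_ζ(k) ≤ |V| = n`.
-/

open Finset

variable {k n' : ℕ} {ζ : ℝ}

section Distance

@[simp]
theorem dLB_self (v : LBV k n') : dLB k n' ζ v v = 0 := by
  simp [dLB]

theorem dLB_inl_left {u : Fin (k - 1)} {b : LBV k n'} (h : Sum.inl u ≠ b) :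
    dLB k n' ζ (Sum.inl u) b = ζ := by
  rw [dLB, if_neg h]

theorem dLB_inl_right {a : LBV k n'} {u : Fin (k - 1)} (h : a ≠ Sum.inl u) :
    dLB k n' ζ a (Sum.inl u) = ζ := by
  unfold dLB; rw [if_neg h]
  rcases a with _ | _ | _ <;> rfl

@[simp]
theorem dLB_Y_Y (j j' : Fin n') :
    dLB k n' ζ (Sum.inr (Sum.inl j)) (Sum.inr (Sum.inl j')) = 0 := by
  unfold dLB; split <;> rfl

@[simp]
theorem dLB_Y_X (j : Fin n') (q : Fin (k - 1) × Fin (n' - 1)) :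
    dLB k n' ζ (Sum.inr (Sum.inl j)) (Sum.inr (Sum.inr q)) = 1 := by
  simp [dLB]

@[simp]
theorem dLB_X_Y (p : Fin (k - 1) × Fin (n' - 1)) (j : Fin n') :
    dLB k n' ζ (Sum.inr (Sum.inr p)) (Sum.inr (Sum.inl j)) = 1 := by
  simp [dLB]

theorem dLB_X_X_of_ne {p q : Fin (k - 1) × Fin (n' - 1)} (h : p.1 ≠ q.1) :
    dLB k n' ζ (Sum.inr (Sum.inr p)) (Sum.inr (Sum.inr q)) = 1 := by
  have hpq : p ≠ q := fun e => h (congrArg Prod.fst e)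
  simp [dLB, hpq, h]

theorem dLB_nonneg (hζ : 0 ≤ ζ) (a b : LBV k n') : 0 ≤ dLB k n' ζ a b := by
  rcases a with _ | _ | _ <;> rcases b with _ | _ | _ <;> simp only [dLB] <;> split_ifs <;>
    norm_num [hζ]

end Distance

section Cost

theorem costLB_nonneg (hζ : 0 ≤ ζ) (R : Finset (LBV k n')) : 0 ≤ costLB k n' ζ R :=
  sum_nonneg fun v _ => Real.sInf_nonneg <| by
    rintro _ ⟨r, -, rfl⟩
    exact dLB_nonneg hζ v r

theorem mul_card_le_costLB (hζ : 0 ≤ ζ) {R : Finset (LBV k n')} (hR : R.Nonempty)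
    {S : Finset (LBV k n')} {c : ℝ} (h : ∀ v ∈ S, ∀ r ∈ R, c ≤ dLB k n' ζ v r) :
    c * S.card ≤ costLB k n' ζ R := by
  have hterm (v : LBV k n') : 0 ≤ sInf ((fun r => dLB k n' ζ v r) '' ↑R) :=
    Real.sInf_nonneg <| by rintro _ ⟨r, -, rfl⟩; exact dLB_nonneg hζ v r
  calc c * S.card = ∑ _v ∈ S, c := by rw [sum_const, nsmul_eq_mul, mul_comm]
    _ ≤ ∑ v ∈ S, sInf ((fun r => dLB k n' ζ v r) '' ↑R) :=
        sum_le_sum fun v hv => le_csInf (hR.to_set.image _) <| by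
          rintro _ ⟨r, hr, rfl⟩
          exact h v hv r hr
    _ ≤ costLB k n' ζ R := sum_le_sum_of_subset_of_nonneg (subset_univ S) fun v _ _ => hterm v

theorem costLB_le_card_mul {R : Finset (LBV k n')} {c : ℝ}
    (h : ∀ v, ∃ r ∈ R, dLB k n' ζ v r ≤ c) :
    costLB k n' ζ R ≤ Fintype.card (LBV k n') * c := by
  rw [← nsmul_eq_mul, ← card_univ, ← sum_const]
  refine sum_le_sum fun v _ => ?_
  obtain ⟨r, hr, hvr⟩ := h v
  exact (csInf_le ((R.finite_toSet.image _).bddBelow) ⟨r, hr, rfl⟩).trans hvr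

theorem card_LBV (hk : 1 ≤ k) (hn' : 1 ≤ n') : Fintype.card (LBV k n') = k * n' := by
  simp only [Fintype.card_sum, Fintype.card_prod, Fintype.card_fin]
  obtain ⟨k, rfl⟩ := Nat.exists_eq_add_of_le' hk
  obtain ⟨n', rfl⟩ := Nat.exists_eq_add_of_le' hn'
  simp only [Nat.add_sub_cancel]
  ring

theorem optLB_le (hk : 1 ≤ k) (hn' : 1 ≤ n') (hζ : 0 ≤ ζ) :
    optLB k n' ζ k ≤ k * n' := by
  set R : Finset (LBV k n') := cons (Sum.inr (Sum.inl ⟨0, hn'⟩)) (univ.map .inl) (by simp)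
  have hcard : R.card = k := by rw [card_cons, card_map, card_univ, Fintype.card_fin]; omega
  have hcover : ∀ v, ∃ r ∈ R, dLB k n' ζ v r ≤ 1 := by
    rintro (u | j | p)
    · exact ⟨Sum.inl u, by simp [R], by simp⟩
    · exact ⟨_, mem_cons_self _ _, by simp⟩
    · exact ⟨_, mem_cons_self _ _, by simp⟩
  calc optLB k n' ζ k ≤ costLB k n' ζ R :=
        csInf_le ⟨0, by rintro _ ⟨R', -, rfl⟩; exact costLB_nonneg hζ R'⟩ ⟨R, hcard, rfl⟩
    _ ≤ Fintype.card (LBV k n') * 1 := costLB_le_card_mul hcover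
    _ = k * n' := by simp [card_LBV hk hn']

end Cost

section Centers

variable {R : Finset (LBV k n')}

theorem exists_Y_mem_of_costLB_lt (hζ : 1 ≤ ζ) (hR : R.Nonempty)
    (hcost : costLB k n' ζ R < n') : ∃ j : Fin n', (Sum.inr (Sum.inl j) : LBV k n') ∈ R := by
  by_contra! hY
  let Y : Finset (LBV k n') := univ.map (Function.Embedding.inl.trans .inr)
  have hfar : ∀ v ∈ Y, ∀ r ∈ R, 1 ≤ dLB k n' ζ v r := by
    simp only [Y, mem_map, mem_univ, true_and]
    rintro _ ⟨j, rfl⟩ (u | j' | q) hr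
    · simpa [dLB_inl_right] using hζ
    · exact absurd hr (hY j')
    · simp
  have := mul_card_le_costLB (by linarith) hR hfar
  rw [card_map, card_univ, Fintype.card_fin, one_mul] at this
  linarith

theorem exists_X_mem_of_costLB_lt (hζ : 1 ≤ ζ) (hR : R.Nonempty)
    (hcost : costLB k n' ζ R < n' - 1) (h : Fin (k - 1)) :
    ∃ j : Fin (n' - 1), (Sum.inr (Sum.inr (h, j)) : LBV k n') ∈ R := by
  by_contra! hX
  let X : Finset (LBV k n') :=
    univ.map ((Function.Embedding.sectR h _).trans (Function.Embedding.inr.trans .inr))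
  have hfar : ∀ v ∈ X, ∀ r ∈ R, 1 ≤ dLB k n' ζ v r := by
    simp only [X, mem_map, mem_univ, true_and]
    rintro _ ⟨j, rfl⟩ (u | j' | ⟨h', j'⟩) hr
    · simpa [dLB_inl_right] using hζ
    · simp
    · obtain rfl | hh := eq_or_ne h h'
      · exact absurd hr (hX j')
      · simp [dLB_X_X_of_ne (p := (h, j)) (q := (h', j')) hh]
  have := mul_card_le_costLB (by linarith) hR hfar
  rw [card_map, card_univ, Fintype.card_fin, one_mul] at this
  have : (n' : ℝ) - 1 ≤ ((n' - 1 : ℕ) : ℝ) := by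
    rcases n' with _ | n' <;> simp
  linarith

theorem exists_U_notMem_of_card_lt (hY : ∃ j : Fin n', (Sum.inr (Sum.inl j) : LBV k n') ∈ R)
    (hX : ∀ h : Fin (k - 1), ∃ j : Fin (n' - 1), (Sum.inr (Sum.inr (h, j)) : LBV k n') ∈ R)
    (hcard : R.card < 2 * (k - 1) + 1) : ∃ u : Fin (k - 1), (Sum.inl u : LBV k n') ∉ R := by
  by_contra! hU
  obtain ⟨j₀, hj₀⟩ := hY
  choose jx hjx using hX
  let f : Option (Fin (k - 1) ⊕ Fin (k - 1)) → LBV k n'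
    | none => Sum.inr (Sum.inl j₀)
    | some (Sum.inl h) => Sum.inr (Sum.inr (h, jx h))
    | some (Sum.inr u) => Sum.inl u
  have := card_le_card_of_injOn f (s := univ) (t := R)
    (by rintro (_ | h | u) - <;> simp [f, hj₀, hjx, hU])
    (by rintro (_ | h | u) - (_ | h' | u') - e <;> simp_all [f])
  rw [card_univ, Fintype.card_option, Fintype.card_sum, Fintype.card_fin] at this
  omega

theorem le_costLB_of_inl_notMem (hζ : 0 ≤ ζ) (hR : R.Nonempty) {u : Fin (k - 1)}
    (hu : (Sum.inl u : LBV k n') ∉ R) : ζ ≤ costLB k n' ζ R := by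
  have hfar : ∀ v ∈ ({Sum.inl u} : Finset (LBV k n')), ∀ r ∈ R, ζ ≤ dLB k n' ζ v r := by
    rintro _ hv r hr
    rw [mem_singleton.mp hv, dLB_inl_left (fun e => hu (e ▸ hr))]
  simpa using mul_card_le_costLB hζ hR hfar

end Centers

/-- For every nonempty set `R ⊆ V` with `|R| ≤ 2k−2`: if `COST_2(R) < n/k − 1`,
then `R` contains at least one vertex of `Y` and at least one vertex of each
group `X_h` (`h = 2, …, k`), some vertex of `U` does not belong to `R`, and
consequently `COST_{n³}(R) ≥ n³`; since `opt_{n³}(k) ≤ n`, this gives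
`COST_{n³}(R) ≥ n² · opt_{n³}(k)`. -/
theorem stmt4 (n k : ℕ) (hk : 2 ≤ k) (hdvd : k ∣ n) (hnk : 3 ≤ n / k)
    (R : Finset (LBV k (n / k))) (hRne : R.Nonempty) (hRcard : R.card ≤ 2 * k - 2)
    (hcost : costLB k (n / k) 2 R < ((n / k : ℕ) : ℝ) - 1) :
    (∃ j : Fin (n / k), (Sum.inr (Sum.inl j) : LBV k (n / k)) ∈ R) ∧
    (∀ h : Fin (k - 1), ∃ j : Fin (n / k - 1),
      (Sum.inr (Sum.inr (h, j)) : LBV k (n / k)) ∈ R) ∧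
    (∃ u : Fin (k - 1), (Sum.inl u : LBV k (n / k)) ∉ R) ∧
    (n : ℝ) ^ 3 ≤ costLB k (n / k) ((n : ℝ) ^ 3) R ∧
    (n : ℝ) ^ 2 * optLB k (n / k) ((n : ℝ) ^ 3) k ≤ costLB k (n / k) ((n : ℝ) ^ 3) R := by
  have hY := exists_Y_mem_of_costLB_lt (ζ := 2) one_le_two hRne (by linarith)
  have hX := exists_X_mem_of_costLB_lt one_le_two hRne hcost
  obtain ⟨u, hu⟩ := exists_U_notMem_of_card_lt hY hX (by omega)
  have hD := le_costLB_of_inl_notMem (ζ := (n : ℝ) ^ 3) (by positivity) hRne hu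
  have hopt : optLB k (n / k) ((n : ℝ) ^ 3) k ≤ n := by
    have := optLB_le (k := k) (n' := n / k) (ζ := (n : ℝ) ^ 3) (by omega) (by omega)
      (by positivity)
    rwa [← Nat.cast_mul, Nat.mul_div_cancel' hdvd] at this
  refine ⟨hY, hX, ⟨u, hu⟩, hD, ?_⟩
  calc (n : ℝ) ^ 2 * optLB k (n / k) ((n : ℝ) ^ 3) k ≤ (n : ℝ) ^ 2 * n := by gcongr
    _ = (n : ℝ) ^ 3 := by ring
    _ ≤ _ := hD
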